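/- Let A₁, A₂ be invertible 2×2 real matrices with ‖A₁‖ < 1 and ‖A₂‖ < 1, let p ∈ (0,1), q > 1, and let κ > 0 satisfy ϱ̲(A₁, A₂) ≥ e^{−κ} and log(p^q + (1−p)^q)/((1−q)·κ) ≤ 1. Then 𝔯_q(A₁, A₂, p) ≥ log(p^q + (1−p)^q)/((1−q)·κ). -/

import Mathlib

open MeasureTheory Filter Topology

noncomputable section

/-- The operator norm of a `d × d` real matrix induced by the Euclidean norm on `ℝ^d`. -/
noncomputable def opNorm {d : ℕ} (A : Matrix (Fin d) (Fin d) ℝ) : ℝ :=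
  ‖Matrix.toEuclideanCLM (𝕜 := ℝ) (n := Fin d) A‖

/-- The singular values of a `d × d` real matrix, in decreasing order:
`singularValues A j` is `σ_{j+1}(A)`, the `(j+1)`-st largest singular value. -/
noncomputable def singularValues {d : ℕ} (A : Matrix (Fin d) (Fin d) ℝ) : Fin d → ℝ :=
  fun j =>
    (fun i => Real.sqrt ((Matrix.isHermitian_conjTranspose_mul_self A).eigenvalues i))
      (Tuple.sort (fun i => Real.sqrt ((Matrix.isHermitian_conjTranspose_mul_self A).eigenvalues i))
        (Fin.rev j))

/-- The singular value function `φ^s(A)`. -/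
noncomputable def svf {d : ℕ} (s : ℝ) (A : Matrix (Fin d) (Fin d) ℝ) : ℝ :=
  if (d : ℝ) ≤ s then |A.det| ^ (s / d)
  else ∏ i : Fin d,
    if (i : ℕ) < ⌊s⌋₊ then singularValues A i
    else if (i : ℕ) = ⌊s⌋₊ then singularValues A i ^ (s - (⌊s⌋₊ : ℝ))
    else 1

/-- The product `A_{w 0} ⋯ A_{w (n-1)}` of matrices along the word `w`. -/
noncomputable def wordProd {d n : ℕ} (A : Fin 2 → Matrix (Fin d) (Fin d) ℝ)
    (w : Fin n → Fin 2) : Matrix (Fin d) (Fin d) ℝ :=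
  (List.ofFn fun j => A (w j)).prod

/-- The probability vector `(p, 1-p)`. -/
noncomputable def pvec (p : ℝ) : Fin 2 → ℝ := ![p, 1 - p]

/-- `Σ_{i₁,…,i_n ∈ {1,2}} φ^s(A_{i₁}⋯A_{i_n})^{1−q} p_{i₁}^q ⋯ p_{i_n}^q`. -/
noncomputable def Zsum (A : Fin 2 → Matrix (Fin 2) (Fin 2) ℝ) (p q s : ℝ) (n : ℕ) : ℝ :=
  ∑ w : Fin n → Fin 2,
    svf s (wordProd A w) ^ (1 - q) * ∏ j : Fin n, pvec p (w j) ^ q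

/-- `𝔯_q(A₁, A₂, p)`. -/
noncomputable def rqDim (A : Fin 2 → Matrix (Fin 2) (Fin 2) ℝ) (p q : ℝ) : ℝ :=
  sSup {s : ℝ | 0 < s ∧ Summable (fun n : ℕ => Zsum A p q s (n + 1))}

/-- `R_q(A₁, A₂, p, s)`. -/
noncomputable def Rq (A : Fin 2 → Matrix (Fin 2) (Fin 2) ℝ) (p q s : ℝ) : ℝ :=
  limUnder atTop (fun n : ℕ => (1 / (n : ℝ)) * Real.log (Zsum A p q s n))

/-- The minimum over all words of length `n` of the norm of the corresponding product. -/
noncomputable def minNormProd (A : Fin 2 → Matrix (Fin 2) (Fin 2) ℝ) (n : ℕ) : ℝ :=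
  ⨅ w : Fin n → Fin 2, opNorm (wordProd A w)

/-- The lower spectral radius `ϱ̲(A₁, A₂)`. -/
noncomputable def lsr (A : Fin 2 → Matrix (Fin 2) (Fin 2) ℝ) : ℝ :=
  limUnder atTop (fun n : ℕ => minNormProd A n ^ (1 / (n : ℝ)))

/-- Pairs of invertible `2 × 2` matrices of operator norm less than one. -/
def validPair : Set (Matrix (Fin 2) (Fin 2) ℝ × Matrix (Fin 2) (Fin 2) ℝ) :=
  {B | IsUnit B.1 ∧ IsUnit B.2 ∧ opNorm B.1 < 1 ∧ opNorm B.2 < 1}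

/-- Rotation of `ℝ²` about the origin through angle `θ`. -/
noncomputable def rot (θ : ℝ) : Matrix (Fin 2) (Fin 2) ℝ :=
  !![Real.cos θ, -Real.sin θ; Real.sin θ, Real.cos θ]

/-- `(A₁, A₂)` is `(c, ε, λ)`-resistant. -/
def ResistantWith (c ε lam : ℝ) (A : Fin 2 → Matrix (Fin 2) (Fin 2) ℝ) : Prop :=
  ∀ n : ℕ, 1 ≤ n → ∀ w : Fin n → Fin 2,
    ((Finset.univ.filter fun j => w j = 1).card : ℝ) ≤ ε * n →
    c * lam ^ n ≤ opNorm (wordProd A w)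

/-- `(A₁, A₂)` is resistant. -/
def Resistant (A : Fin 2 → Matrix (Fin 2) (Fin 2) ℝ) : Prop :=
  ∃ c > (0:ℝ), ∃ ε > (0:ℝ), ∃ lam > (1:ℝ), ResistantWith c ε lam A

/-- `ℋ`: `2 × 2` real matrices of determinant one with two unequal real eigenvalues. -/
def Hset : Set (Matrix (Fin 2) (Fin 2) ℝ) :=
  {H | H.det = 1 ∧ ∃ a b : ℝ, a ≠ b ∧ H.charpoly.IsRoot a ∧ H.charpoly.IsRoot b}

/-- `ℰ`: `2 × 2` real matrices of determinant one with non-real eigenvalues. -/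
def Eset : Set (Matrix (Fin 2) (Fin 2) ℝ) :=
  {R | R.det = 1 ∧ ∀ x : ℝ, ¬ R.charpoly.IsRoot x}


/-- Abbreviation for the space of `2 × 2` real matrices. -/
abbrev Mat2 := Matrix (Fin 2) (Fin 2) ℝ

/-!
For `s < 1` we have `φ^s(M) = σ₁(M)^s ≥ ‖M‖^s`, and by Fekete's lemma every product of length
`n` has norm at least `ϱ̲^n ≥ e^{-κn}`. Since `1 - q < 0`, the `n`-th term of the series is then
at most `(e^{κs(q-1)} (p^q + (1-p)^q))^n`, a convergent geometric series exactly when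
`s < log(p^q + (1-p)^q) / ((1-q)κ)`; the hypothesis that this threshold is `≤ 1` keeps us in the
range `s < 1`.

The set of admissible `s` must also be shown bounded above, since `sSup` of an unbounded set of
reals is `0`: for `s ≥ 2`, `φ^s` is a power of `|det|`, so with `m := max ‖Aᵢ‖ < 1` the terms are
at least `(m^{s(1-q)} (p^q + (1-p)^q))^n`, whose ratio exceeds `1` for large `s`.
-/

open Matrix
open scoped Matrix.Norms.L2Operator

namespace Matrix

variable {𝕜 n : Type*} [RCLike 𝕜] [Fintype n] [DecidableEq n]

lemma IsHermitian.l2_opNorm_eq {A : Matrix n n 𝕜} (hA : A.IsHermitian) :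
    ‖A‖ = ‖hA.eigenvalues‖ := by
  conv_lhs => rw [hA.spectral_theorem, Unitary.conjStarAlgAut_apply, ← Unitary.coe_star]
  rw [CStarRing.norm_mul_coe_unitary, CStarRing.norm_coe_unitary_mul, l2_opNorm_diagonal]
  simp [Pi.norm_def]

lemma eigenvalues_conjTranspose_mul_self_le_l2_opNorm_sq (A : Matrix n n 𝕜) (i : n) :
    (isHermitian_conjTranspose_mul_self A).eigenvalues i ≤ ‖A‖ ^ 2 := by
  rw [sq, ← l2_opNorm_conjTranspose_mul_self,
    (isHermitian_conjTranspose_mul_self A).l2_opNorm_eq]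
  exact (Real.le_norm_self _).trans (norm_le_pi_norm _ i)

lemma norm_det_le_l2_opNorm_pow (A : Matrix n n 𝕜) : ‖A.det‖ ≤ ‖A‖ ^ Fintype.card n := by
  have hB := isHermitian_conjTranspose_mul_self A
  have hdet : (‖A.det‖ ^ 2 : ℝ) = ∏ i, hB.eigenvalues i := by
    have h := hB.det_eq_prod_eigenvalues
    rw [det_mul, det_conjTranspose, ← starRingEnd_apply, RCLike.conj_mul] at h
    exact_mod_cast h
  refine le_of_pow_le_pow_left₀ two_ne_zero (pow_nonneg (norm_nonneg A) _) ?_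
  calc ‖A.det‖ ^ 2 = ∏ i, hB.eigenvalues i := hdet
    _ ≤ ∏ _i : n, ‖A‖ ^ 2 := Finset.prod_le_prod
        (fun i _ => eigenvalues_conjTranspose_mul_self_nonneg A i)
        (fun i _ => eigenvalues_conjTranspose_mul_self_le_l2_opNorm_sq A i)
    _ = (‖A‖ ^ Fintype.card n) ^ 2 := by
        rw [Finset.prod_const, Finset.card_univ, ← pow_mul, ← pow_mul, mul_comm]

end Matrix

section SingularValues

variable {d : ℕ}

lemma opNorm_eq_norm (A : Matrix (Fin d) (Fin d) ℝ) : opNorm A = ‖A‖ := rfl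

lemma opNorm_nonneg (A : Matrix (Fin d) (Fin d) ℝ) : 0 ≤ opNorm A := norm_nonneg _

lemma singularValues_nonneg (A : Matrix (Fin d) (Fin d) ℝ) (j : Fin d) :
    0 ≤ singularValues A j :=
  Real.sqrt_nonneg _

lemma sqrt_eigenvalues_le_singularValues_zero [NeZero d] (A : Matrix (Fin d) (Fin d) ℝ)
    (i : Fin d) :
    √((isHermitian_conjTranspose_mul_self A).eigenvalues i) ≤ singularValues A 0 := by
  set g := fun i => √((isHermitian_conjTranspose_mul_self A).eigenvalues i)
  have hlast : (Tuple.sort g).symm i ≤ Fin.rev 0 := by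
    rw [Fin.le_def, Fin.val_rev]
    have := ((Tuple.sort g).symm i).isLt
    simp only [Fin.val_zero]
    omega
  calc g i = g (Tuple.sort g ((Tuple.sort g).symm i)) := by rw [Equiv.apply_symm_apply]
    _ ≤ g (Tuple.sort g (Fin.rev 0)) := Tuple.monotone_sort g hlast

lemma opNorm_le_singularValues_zero [NeZero d] (A : Matrix (Fin d) (Fin d) ℝ) :
    opNorm A ≤ singularValues A 0 := by
  have hB := isHermitian_conjTranspose_mul_self A
  refine (pow_le_pow_iff_left₀ (norm_nonneg A) (singularValues_nonneg A 0) two_ne_zero).mp ?_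
  rw [sq, ← l2_opNorm_conjTranspose_mul_self, hB.l2_opNorm_eq]
  refine pi_norm_le_iff_of_nonneg (sq_nonneg _) |>.mpr fun i => ?_
  have hi := eigenvalues_conjTranspose_mul_self_nonneg A i
  rw [Real.norm_of_nonneg hi, ← Real.sq_sqrt hi]
  exact pow_le_pow_left₀ (Real.sqrt_nonneg _) (sqrt_eigenvalues_le_singularValues_zero A i) 2

lemma abs_det_le_opNorm_pow (A : Matrix (Fin d) (Fin d) ℝ) : |A.det| ≤ opNorm A ^ d := by
  rw [opNorm_eq_norm]
  simpa using norm_det_le_l2_opNorm_pow A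

lemma svf_nonneg (s : ℝ) (A : Matrix (Fin d) (Fin d) ℝ) : 0 ≤ svf s A := by
  unfold svf
  split_ifs
  · positivity
  · refine Finset.prod_nonneg fun i _ => ?_
    split_ifs
    · exact singularValues_nonneg A i
    · exact Real.rpow_nonneg (singularValues_nonneg A i) _
    · exact zero_le_one

lemma svf_of_lt_one [NeZero d] {s : ℝ} (hs1 : s < 1)
    (A : Matrix (Fin d) (Fin d) ℝ) : svf s A = singularValues A 0 ^ s := by
  have hd : ¬ (d : ℝ) ≤ s := by
    have : (1 : ℝ) ≤ d := by exact_mod_cast Nat.one_le_iff_ne_zero.mpr (NeZero.ne d)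
    linarith
  rw [svf, if_neg hd, Nat.floor_eq_zero.mpr hs1, Finset.prod_eq_single 0]
  · simp
  · intro i _ hi
    simp [hi]
  · simp

lemma svf_of_le {s : ℝ} (hs : (d : ℝ) ≤ s) (A : Matrix (Fin d) (Fin d) ℝ) :
    svf s A = |A.det| ^ (s / d) :=
  if_pos hs

end SingularValues

section Words

variable {d : ℕ} (A : Fin 2 → Matrix (Fin d) (Fin d) ℝ)

lemma wordProd_append {m n : ℕ} (w₁ : Fin m → Fin 2) (w₂ : Fin n → Fin 2) :
    wordProd A (Fin.append w₁ w₂) = wordProd A w₁ * wordProd A w₂ := by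
  simp only [wordProd, List.ofFn_add, Fin.append_left', Fin.append_right, List.prod_append]

lemma det_wordProd {n : ℕ} (w : Fin n → Fin 2) :
    (wordProd A w).det = ∏ j, (A (w j)).det := by
  rw [wordProd, ← coe_detMonoidHom, map_list_prod, List.map_ofFn, List.prod_ofFn]
  rfl

lemma det_wordProd_ne_zero (hA : ∀ i, IsUnit (A i)) {n : ℕ} (w : Fin n → Fin 2) :
    (wordProd A w).det ≠ 0 := by
  rw [det_wordProd, Finset.prod_ne_zero_iff]
  exact fun j _ => ((isUnit_iff_isUnit_det _).mp (hA (w j))).ne_zero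

lemma pow_le_abs_det_wordProd {δ : ℝ} (hδ : 0 ≤ δ) (hA : ∀ i, δ ≤ |(A i).det|) {n : ℕ}
    (w : Fin n → Fin 2) : δ ^ n ≤ |(wordProd A w).det| := by
  rw [det_wordProd, Finset.abs_prod]
  simpa using Finset.prod_le_prod (fun _ _ => hδ) (fun j (_ : j ∈ Finset.univ) => hA (w j))

lemma abs_det_wordProd_le_pow {M : ℝ} (hA : ∀ i, |(A i).det| ≤ M) {n : ℕ}
    (w : Fin n → Fin 2) : |(wordProd A w).det| ≤ M ^ n := by
  rw [det_wordProd, Finset.abs_prod]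
  simpa using
    Finset.prod_le_prod (fun j _ => abs_nonneg _) (fun j (_ : j ∈ Finset.univ) => hA (w j))

end Words

/-- Multiplicative form of Fekete's lemma. -/
lemma pow_limUnder_rpow_le_of_submultiplicative {a : ℕ → ℝ} (ha : ∀ n, 0 < a n)
    (hmul : ∀ m n, a (m + n) ≤ a m * a n) {δ : ℝ} (hδ : 0 < δ) (hδa : ∀ n, δ ^ n ≤ a n)
    (n : ℕ) : limUnder atTop (fun n : ℕ => a n ^ (1 / (n : ℝ))) ^ n ≤ a n := by
  set u : ℕ → ℝ := fun n => Real.log (a n)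
  have hsub : Subadditive u := fun m n => by
    simp only [u]
    rw [← Real.log_mul (ha m).ne' (ha n).ne']
    exact Real.log_le_log (ha _) (hmul m n)
  have hbdd : BddBelow (Set.range fun n => u n / n) := by
    refine ⟨min (Real.log δ) 0, Set.forall_mem_range.mpr fun k => ?_⟩
    rcases Nat.eq_zero_or_pos k with rfl | hk
    · simp
    · have hlog : k * Real.log δ ≤ u k := by
        rw [← Real.log_pow]; exact Real.log_le_log (pow_pos hδ k) (hδa k)
      exact (min_le_left _ _).trans ((le_div_iff₀ (by positivity)).mpr (by linarith))
  have hlim : limUnder atTop (fun n : ℕ => a n ^ (1 / (n : ℝ))) = Real.exp hsub.lim := by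
    refine Tendsto.limUnder_eq <| ((Real.continuous_exp.tendsto _).comp
      (hsub.tendsto_lim hbdd)).congr fun k => ?_
    rw [Function.comp_apply, Real.rpow_def_of_pos (ha k), mul_one_div]
  rw [hlim, ← Real.exp_nat_mul]
  rcases Nat.eq_zero_or_pos n with rfl | hn
  · simpa using hδa 0
  · calc Real.exp (n * hsub.lim) ≤ Real.exp (u n) := by
          rw [Real.exp_le_exp, ← le_div_iff₀' (by positivity)]
          exact hsub.lim_le_div hbdd hn.ne'
      _ = a n := Real.exp_log (ha n)

section LowerSpectralRadius

variable (A : Fin 2 → Mat2)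

lemma minNormProd_le {n : ℕ} (w : Fin n → Fin 2) :
    minNormProd A n ≤ opNorm (wordProd A w) :=
  ciInf_le (Finite.bddBelow_range _) w

lemma exists_minNormProd_eq (n : ℕ) :
    ∃ w : Fin n → Fin 2, opNorm (wordProd A w) = minNormProd A n :=
  exists_eq_ciInf_of_finite

lemma minNormProd_add_le (m n : ℕ) :
    minNormProd A (m + n) ≤ minNormProd A m * minNormProd A n := by
  obtain ⟨w₁, hw₁⟩ := exists_minNormProd_eq A m
  obtain ⟨w₂, hw₂⟩ := exists_minNormProd_eq A n
  calc minNormProd A (m + n) ≤ opNorm (wordProd A (Fin.append w₁ w₂)) := minNormProd_le A _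
    _ ≤ opNorm (wordProd A w₁) * opNorm (wordProd A w₂) := by
        rw [wordProd_append]; exact l2_opNorm_mul _ _
    _ = minNormProd A m * minNormProd A n := by rw [hw₁, hw₂]

variable {A}

/-- The determinant is multiplicative and `|det M| ≤ ‖M‖²`. -/
lemma exists_pow_le_minNormProd (hA : ∀ i, IsUnit (A i)) :
    ∃ δ > 0, ∀ n, δ ^ n ≤ minNormProd A n := by
  have hdet : ∀ i, 0 < |(A i).det| := fun i =>
    abs_pos.mpr ((isUnit_iff_isUnit_det _).mp (hA i)).ne_zero
  set δ := min |(A 0).det| |(A 1).det|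
  have hδ0 : 0 < δ := lt_min (hdet 0) (hdet 1)
  have hδ : ∀ i, δ ≤ |(A i).det| := Fin.forall_fin_two.mpr ⟨min_le_left _ _, min_le_right _ _⟩
  refine ⟨√δ, Real.sqrt_pos.mpr hδ0, fun n => ?_⟩
  obtain ⟨w, hw⟩ := exists_minNormProd_eq A n
  rw [← hw, ← pow_le_pow_iff_left₀ (by positivity) (opNorm_nonneg _) two_ne_zero, ← pow_mul,
    mul_comm, pow_mul, Real.sq_sqrt hδ0.le]
  exact (pow_le_abs_det_wordProd A hδ0.le hδ w).trans (abs_det_le_opNorm_pow _)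

lemma pow_lsr_le_opNorm_wordProd (hA : ∀ i, IsUnit (A i)) {n : ℕ} (w : Fin n → Fin 2) :
    lsr A ^ n ≤ opNorm (wordProd A w) := by
  obtain ⟨δ, hδ, hδA⟩ := exists_pow_le_minNormProd hA
  exact (pow_limUnder_rpow_le_of_submultiplicative
    (fun k => (pow_pos hδ k).trans_le (hδA k)) (minNormProd_add_le A) hδ hδA n).trans
    (minNormProd_le A w)

end LowerSpectralRadius

section WordSingularValues

variable {A : Fin 2 → Mat2} {s : ℝ}

lemma svf_wordProd_rpow_le_of_lt_one (hA : ∀ i, IsUnit (A i)) {ρ : ℝ} (hρ : 0 < ρ)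
    (hρA : ρ ≤ lsr A) (hs0 : 0 ≤ s) (hs1 : s < 1) {t : ℝ} (ht : t ≤ 0) {n : ℕ}
    (w : Fin n → Fin 2) : svf s (wordProd A w) ^ t ≤ (ρ ^ (s * t)) ^ n := by
  have hσ : ρ ^ n ≤ singularValues (wordProd A w) 0 :=
    (pow_le_pow_left₀ hρ.le hρA n).trans <|
      (pow_lsr_le_opNorm_wordProd hA w).trans (opNorm_le_singularValues_zero _)
  calc svf s (wordProd A w) ^ t = (singularValues (wordProd A w) 0 ^ s) ^ t := by
        rw [svf_of_lt_one hs1]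
    _ ≤ ((ρ ^ n) ^ s) ^ t := Real.rpow_le_rpow_of_nonpos (by positivity)
        (Real.rpow_le_rpow (by positivity) hσ hs0) ht
    _ = (ρ ^ (s * t)) ^ n := by
        rw [← Real.rpow_mul (by positivity), ← Real.rpow_natCast, ← Real.rpow_mul hρ.le,
          ← Real.rpow_natCast, ← Real.rpow_mul hρ.le, mul_comm]

lemma le_svf_wordProd_rpow_of_two_le (hA : ∀ i, IsUnit (A i)) {m : ℝ} (hm : 0 < m)
    (hAm : ∀ i, opNorm (A i) ≤ m) (hs : 2 ≤ s) {t : ℝ} (ht : t ≤ 0) {n : ℕ}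
    (w : Fin n → Fin 2) : (m ^ (s * t)) ^ n ≤ svf s (wordProd A w) ^ t := by
  have hdet : |(wordProd A w).det| ≤ (m ^ 2) ^ n := abs_det_wordProd_le_pow A (fun i =>
    (abs_det_le_opNorm_pow (A i)).trans (pow_le_pow_left₀ (opNorm_nonneg _) (hAm i) 2)) w
  have hdet0 : 0 < |(wordProd A w).det| := abs_pos.mpr (det_wordProd_ne_zero A hA w)
  calc (m ^ (s * t)) ^ n = (((m ^ 2) ^ n) ^ (s / 2)) ^ t := by
        rw [← Real.rpow_natCast, ← Real.rpow_mul hm.le, ← Real.rpow_natCast,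
          ← Real.rpow_natCast, ← Real.rpow_mul hm.le, ← Real.rpow_mul hm.le,
          ← Real.rpow_mul hm.le]
        push_cast
        ring_nf
    _ ≤ (|(wordProd A w).det| ^ (s / 2)) ^ t :=
        Real.rpow_le_rpow_of_nonpos (by positivity)
          (Real.rpow_le_rpow hdet0.le hdet (by positivity)) ht
    _ = svf s (wordProd A w) ^ t := by
        rw [svf_of_le (by exact_mod_cast hs)]
        norm_num

end WordSingularValues

lemma rpow_add_one_sub_rpow_mem_Ioo {p q : ℝ} (hp : p ∈ Set.Ioo (0 : ℝ) 1) (hq : 1 < q) :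
    p ^ q + (1 - p) ^ q ∈ Set.Ioo (0 : ℝ) 1 := by
  have hp' : 0 < 1 - p := sub_pos.mpr hp.2
  refine ⟨add_pos (Real.rpow_pos_of_pos hp.1 q) (Real.rpow_pos_of_pos hp' q), ?_⟩
  linarith [Real.rpow_lt_self_of_lt_one hp.1 hp.2 hq,
    Real.rpow_lt_self_of_lt_one hp' (by linarith [hp.1]) hq]

lemma sum_prod_pvec_rpow (p q : ℝ) (n : ℕ) :
    ∑ w : Fin n → Fin 2, ∏ j, pvec p (w j) ^ q = (p ^ q + (1 - p) ^ q) ^ n := by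
  rw [← Fintype.prod_sum fun (_ : Fin n) i => pvec p i ^ q, Finset.prod_const,
    Finset.card_univ, Fintype.card_fin, Fin.sum_univ_two]
  rfl

lemma prod_pvec_rpow_nonneg {p : ℝ} (hp : p ∈ Set.Icc (0 : ℝ) 1) (q : ℝ) {n : ℕ}
    (w : Fin n → Fin 2) : 0 ≤ ∏ j, pvec p (w j) ^ q := by
  have hpvec : ∀ i, 0 ≤ pvec p i := Fin.forall_fin_two.mpr ⟨hp.1, sub_nonneg.mpr hp.2⟩
  exact Finset.prod_nonneg fun j _ => Real.rpow_nonneg (hpvec (w j)) q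

section Zsum

variable (A : Fin 2 → Mat2) {p : ℝ} (q s : ℝ)

lemma Zsum_nonneg (hp : p ∈ Set.Icc (0 : ℝ) 1) (n : ℕ) : 0 ≤ Zsum A p q s n :=
  Finset.sum_nonneg fun w _ =>
    mul_nonneg (Real.rpow_nonneg (svf_nonneg s _) _) (prod_pvec_rpow_nonneg hp q w)

lemma Zsum_le_of_forall_le (hp : p ∈ Set.Icc (0 : ℝ) 1) {n : ℕ} {b : ℝ}
    (hb : ∀ w : Fin n → Fin 2, svf s (wordProd A w) ^ (1 - q) ≤ b) :
    Zsum A p q s n ≤ b * (p ^ q + (1 - p) ^ q) ^ n := by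
  rw [Zsum, ← sum_prod_pvec_rpow, Finset.mul_sum]
  exact Finset.sum_le_sum fun w _ =>
    mul_le_mul_of_nonneg_right (hb w) (prod_pvec_rpow_nonneg hp q w)

lemma le_Zsum_of_forall_le (hp : p ∈ Set.Icc (0 : ℝ) 1) {n : ℕ} {b : ℝ}
    (hb : ∀ w : Fin n → Fin 2, b ≤ svf s (wordProd A w) ^ (1 - q)) :
    b * (p ^ q + (1 - p) ^ q) ^ n ≤ Zsum A p q s n := by
  rw [Zsum, ← sum_prod_pvec_rpow, Finset.mul_sum]
  exact Finset.sum_le_sum fun w _ =>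
    mul_le_mul_of_nonneg_right (hb w) (prod_pvec_rpow_nonneg hp q w)

end Zsum

section Summability

variable {A : Fin 2 → Mat2} {p q : ℝ}

lemma summable_Zsum_of_lt (hA : ∀ i, IsUnit (A i)) (hp : p ∈ Set.Ioo (0 : ℝ) 1) (hq : 1 < q)
    {κ : ℝ} (hκ : 0 < κ) (hlsr : Real.exp (-κ) ≤ lsr A) {s : ℝ} (hs0 : 0 ≤ s) (hs1 : s < 1)
    (hs : s < Real.log (p ^ q + (1 - p) ^ q) / ((1 - q) * κ)) :
    Summable (Zsum A p q s) := by
  have hc := rpow_add_one_sub_rpow_mem_Ioo hp hq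
  set c := p ^ q + (1 - p) ^ q
  have hr : Real.exp (-κ) ^ (s * (1 - q)) * c < 1 := by
    rw [lt_div_iff_of_neg (by nlinarith)] at hs
    rw [← Real.exp_mul, ← Real.exp_log hc.1, ← Real.exp_add, Real.exp_lt_one_iff]
    linarith
  refine Summable.of_nonneg_of_le (Zsum_nonneg A q s (Set.Ioo_subset_Icc_self hp))
    (fun n => ?_) (summable_geometric_of_lt_one (mul_nonneg (by positivity) hc.1.le) hr)
  rw [mul_pow]
  exact Zsum_le_of_forall_le A q s (Set.Ioo_subset_Icc_self hp) <|
    svf_wordProd_rpow_le_of_lt_one hA (Real.exp_pos _) hlsr hs0 hs1 (by linarith)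

lemma bddAbove_setOf_summable_Zsum (hA : ∀ i, IsUnit (A i)) (hA1 : ∀ i, opNorm (A i) < 1)
    (hp : p ∈ Set.Ioo (0 : ℝ) 1) (hq : 1 < q) :
    BddAbove {s : ℝ | 0 < s ∧ Summable fun n : ℕ => Zsum A p q s (n + 1)} := by
  have hc := rpow_add_one_sub_rpow_mem_Ioo hp hq
  set c := p ^ q + (1 - p) ^ q
  set m := max (opNorm (A 0)) (opNorm (A 1))
  have hAm : ∀ i, opNorm (A i) ≤ m :=
    Fin.forall_fin_two.mpr ⟨le_max_left _ _, le_max_right _ _⟩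
  have hm : 0 < m := (norm_pos_iff.mpr (hA 0).ne_zero).trans_le (hAm 0)
  have hlogm : Real.log m < 0 := Real.log_neg hm (max_lt (hA1 0) (hA1 1))
  refine ⟨max 2 (Real.log c / ((q - 1) * Real.log m)), fun s ⟨_, hsum⟩ => ?_⟩
  by_contra! hlt
  have hR : 1 ≤ m ^ (s * (1 - q)) * c := by
    have hs := (le_max_right _ _).trans hlt.le
    rw [div_le_iff_of_neg (by nlinarith)] at hs
    rw [Real.rpow_def_of_pos hm, ← Real.exp_log hc.1, ← Real.exp_add, Real.one_le_exp_iff]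
    linarith
  obtain ⟨n, hn⟩ := (hsum.tendsto_atTop_zero.eventually_lt_const one_pos).exists
  refine hn.not_ge ((one_le_pow₀ (n := n + 1) hR).trans ?_)
  rw [mul_pow]
  exact le_Zsum_of_forall_le A q s (Set.Ioo_subset_Icc_self hp) <|
    le_svf_wordProd_rpow_of_two_le hA hm hAm ((le_max_left _ _).trans hlt.le) (by linarith)

end Summability

/-- If `ϱ̲(A₁,A₂) ≥ e^{−κ}` and `log(p^q + (1−p)^q)/((1−q)κ) ≤ 1` then
`𝔯_q(A₁,A₂,p) ≥ log(p^q + (1−p)^q)/((1−q)κ)`. -/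
theorem stmt17 (A₁ A₂ : Mat2) (h1 : IsUnit A₁) (h2 : IsUnit A₂)
    (hn1 : opNorm A₁ < 1) (hn2 : opNorm A₂ < 1) (p q κ : ℝ)
    (hp : p ∈ Set.Ioo (0 : ℝ) 1) (hq : 1 < q) (hκ : 0 < κ)
    (hlsr : Real.exp (-κ) ≤ lsr ![A₁, A₂])
    (hle : Real.log (p ^ q + (1 - p) ^ q) / ((1 - q) * κ) ≤ 1) :
    Real.log (p ^ q + (1 - p) ^ q) / ((1 - q) * κ) ≤ rqDim ![A₁, A₂] p q := by
  have hA : ∀ i, IsUnit (![A₁, A₂] i) := Fin.forall_fin_two.mpr ⟨h1, h2⟩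
  have hA1 : ∀ i, opNorm (![A₁, A₂] i) < 1 := Fin.forall_fin_two.mpr ⟨hn1, hn2⟩
  have hc := rpow_add_one_sub_rpow_mem_Ioo hp hq
  set s₀ := Real.log (p ^ q + (1 - p) ^ q) / ((1 - q) * κ)
  have hs₀ : 0 < s₀ :=
    div_pos_of_neg_of_neg (Real.log_neg hc.1 hc.2) (mul_neg_of_neg_of_pos (by linarith) hκ)
  have hsub : Set.Ioo 0 s₀ ⊆
      {s : ℝ | 0 < s ∧ Summable fun n : ℕ => Zsum ![A₁, A₂] p q s (n + 1)} :=
    fun s hs => ⟨hs.1, (summable_nat_add_iff 1).mpr <|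
      summable_Zsum_of_lt hA hp hq hκ hlsr hs.1.le (hs.2.trans_le hle) hs.2⟩
  have h := csSup_le_csSup (bddAbove_setOf_summable_Zsum hA hA1 hp hq)
    (Set.nonempty_Ioo.mpr hs₀) hsub
  rwa [csSup_Ioo hs₀] at h

end
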